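/- (Bernstein's inequality, Catoni's version.) Let U_1, ..., U_n be i.i.d. real-valued random variables such that E(U_1) is well defined (U_1 is integrable) and U_i − E(U_i) ≤ C almost surely for some C ∈ ℝ. Then for every t ≥ 0, E[exp(t Σ_{i=1}^n (U_i − E(U_i)))] ≤ exp(g(Ct) · n t² · Var(U_1)), where g is defined by g(0) = 1 and g(x) = (e^x − 1 − x)/x² for x ≠ 0, and Var(U_1) denotes the variance of U_1 (the inequality being interpreted as trivially true when the right-hand side is infinite). -/

import Mathlib

open MeasureTheory ProbabilityTheory Real

noncomputable section

/-- The function `g` of Catoni's Bernstein inequality: `g(0) = 1` and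
`g(x) = (e^x - 1 - x)/x²` for `x ≠ 0`. -/
def bernG (x : ℝ) : ℝ := if x = 0 then 1 else (Real.exp x - 1 - x) / x ^ 2

/-- Taylor formula with integral remainder for `exp` at order 2. -/
lemma exp_sub_one_sub_eq (x : ℝ) :
    Real.exp x - 1 - x = ∫ s in (0:ℝ)..1, x ^ 2 * ((1 - s) * Real.exp (s * x)) := by
  have h : ∀ s ∈ Set.uIcc (0:ℝ) 1,
      HasDerivAt (fun s : ℝ => Real.exp (s * x) * ((x + 1) - s * x))
        (x ^ 2 * ((1 - s) * Real.exp (s * x))) s := by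
    intro s _
    have h1 : HasDerivAt (fun s : ℝ => s * x) x s := hasDerivAt_mul_const x
    have h2 : HasDerivAt (fun s : ℝ => Real.exp (s * x)) (Real.exp (s * x) * x) s := h1.exp
    have h3 : HasDerivAt (fun s : ℝ => (x + 1) - s * x) (-x) s :=
      (hasDerivAt_mul_const x).const_sub (x + 1)
    have := h2.mul h3
    exact this.congr_deriv (by ring)
  rw [intervalIntegral.integral_eq_sub_of_hasDerivAt h
    (Continuous.intervalIntegrable (by continuity) _ _)]
  simp [Real.exp_zero]
  ring

lemma intervalIntegrable_aux (x : ℝ) :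
    IntervalIntegrable (fun s : ℝ => (1 - s) * Real.exp (s * x)) MeasureTheory.volume 0 1 :=
  Continuous.intervalIntegrable (by continuity) _ _

/-- The key pointwise inequality: for `x ≤ c`, `e^x ≤ 1 + x + g(c) x²`. -/
lemma bernG_key {c x : ℝ} (hx : x ≤ c) :
    Real.exp x ≤ 1 + x + bernG c * x ^ 2 := by
  have hrep := exp_sub_one_sub_eq x
  rw [intervalIntegral.integral_const_mul] at hrep
  have hmain : (∫ s in (0:ℝ)..1, (1 - s) * Real.exp (s * x)) ≤ bernG c := by
    rcases eq_or_ne c 0 with hc | hc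
    · subst hc
      have hle : (∫ s in (0:ℝ)..1, (1 - s) * Real.exp (s * x))
          ≤ ∫ s in (0:ℝ)..1, (1 - s) := by
        apply intervalIntegral.integral_mono_on (by norm_num) (intervalIntegrable_aux x)
          (Continuous.intervalIntegrable (by continuity) _ _)
        intro s hs
        have h1 : Real.exp (s * x) ≤ 1 := by
          rw [← Real.exp_zero]
          exact Real.exp_le_exp.2 (mul_nonpos_of_nonneg_of_nonpos hs.1 hx)
        nlinarith [hs.1, hs.2]
      have : (∫ s in (0:ℝ)..1, (1 - s : ℝ)) = 1 / 2 := by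
        rw [intervalIntegral.integral_sub intervalIntegrable_const intervalIntegral.intervalIntegrable_id]
        simp
        norm_num
      have hb0 : bernG 0 = 1 := by simp [bernG]
      rw [this] at hle
      rw [hb0]
      linarith
    · have hrepc := exp_sub_one_sub_eq c
      rw [intervalIntegral.integral_const_mul] at hrepc
      have hbern : bernG c = ∫ s in (0:ℝ)..1, (1 - s) * Real.exp (s * c) := by
        rw [bernG, if_neg hc, hrepc]
        field_simp
      rw [hbern]
      apply intervalIntegral.integral_mono_on (by norm_num) (intervalIntegrable_aux x)
        (intervalIntegrable_aux c)
      intro s hs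
      have h1 : Real.exp (s * x) ≤ Real.exp (s * c) :=
        Real.exp_le_exp.2 (mul_le_mul_of_nonneg_left hx hs.1)
      have h2 : (0:ℝ) ≤ 1 - s := by linarith [hs.2]
      exact mul_le_mul_of_nonneg_left h1 h2
  have := mul_le_mul_of_nonneg_left hmain (sq_nonneg x)
  nlinarith [hrep]

/-- Bernstein's inequality (Catoni's version, Theorem 5.2.1 in Catoni (2004)):
if `U_1, …, U_n` are i.i.d., integrable, and `U_i - E(U_i) ≤ C` a.s., then for
every `t ≥ 0`,
`E[exp(t ∑ (U_i - E U_i))] ≤ exp(g(Ct) n t² Var(U_1))`,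
the inequality being trivially true when the variance is infinite. -/
theorem bernstein_catoni
    {Ω : Type*} [MeasurableSpace Ω] (P : Measure Ω) [IsProbabilityMeasure P]
    (n : ℕ) (hn : 0 < n) (U : Fin n → Ω → ℝ)
    (hmeas : ∀ i, Measurable (U i))
    (hindep : iIndepFun U P)
    (hident : ∀ i, IdentDistrib (U i) (U ⟨0, hn⟩) P P)
    (hint : Integrable (U ⟨0, hn⟩) P)
    (C : ℝ) (hbdd : ∀ i, ∀ᵐ ω ∂P, U i ω - ∫ x, U i x ∂P ≤ C) :
    ∀ t : ℝ, 0 ≤ t →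
      evariance (U ⟨0, hn⟩) P ≠ ⊤ →
      ∫ ω, Real.exp (t * ∑ i, (U i ω - ∫ x, U i x ∂P)) ∂P
        ≤ Real.exp (bernG (C * t) * n * t ^ 2 * variance (U ⟨0, hn⟩) P) := by
  intro t ht hvar
  set σ := variance (U ⟨0, hn⟩) P with hσ
  set B := bernG (C * t) with hB
  set V : Fin n → Ω → ℝ := fun i ω => U i ω - ∫ x, U i x ∂P with hVdef
  have hVmeas : ∀ i, Measurable (V i) := fun i => (hmeas i).sub measurable_const
  have hintU : ∀ i, Integrable (U i) P := fun i => (hident i).integrable_iff.2 hint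
  have hVint : ∀ i, Integrable (V i) P := fun i => (hintU i).sub (integrable_const _)
  have hEV : ∀ i, ∫ ω, V i ω ∂P = 0 := by
    intro i
    rw [hVdef]
    rw [integral_sub (hintU i) (integrable_const _), integral_const]
    simp
  have hL2 : ∀ i, MemLp (U i) 2 P :=
    fun i => (hident i).memLp_iff.2 ((evariance_lt_top_iff_memLp hint.aestronglyMeasurable).1
      (lt_top_iff_ne_top.2 hvar))
  have hVL2 : ∀ i, MemLp (V i) 2 P := fun i => (hL2 i).sub (memLp_const _)
  have hVsq : ∀ i, Integrable (fun ω => (V i ω) ^ 2) P := fun i => (hVL2 i).integrable_sq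
  have hEVsq : ∀ i, ∫ ω, (V i ω) ^ 2 ∂P = σ := by
    intro i
    have h1 := variance_eq_integral (hL2 i).1.aemeasurable
    have h2 := (hident i).variance_eq
    rw [hσ, ← h2, h1]
  -- per-coordinate mgf bound
  have hVle : ∀ i, ∀ᵐ ω ∂P, t * V i ω ≤ C * t := by
    intro i
    filter_upwards [hbdd i] with ω hω
    calc t * V i ω ≤ t * C := mul_le_mul_of_nonneg_left hω ht
    _ = C * t := mul_comm t C
  have hkey : ∀ i, ∀ᵐ ω ∂P,
      Real.exp (t * V i ω) ≤ 1 + t * V i ω + (B * t ^ 2) * (V i ω) ^ 2 := by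
    intro i
    filter_upwards [hVle i] with ω hω
    calc Real.exp (t * V i ω) ≤ 1 + t * V i ω + B * (t * V i ω) ^ 2 := bernG_key hω
    _ = 1 + t * V i ω + (B * t ^ 2) * (V i ω) ^ 2 := by ring
  have hbound_int : ∀ i, Integrable (fun ω => 1 + t * V i ω + (B * t ^ 2) * (V i ω) ^ 2) P := by
    intro i
    exact ((integrable_const 1).add ((hVint i).const_mul t)).add ((hVsq i).const_mul (B * t ^ 2))
  have hexp_int : ∀ i, Integrable (fun ω => Real.exp (t * V i ω)) P := by
    intro i
    refine (hbound_int i).mono' (((hVmeas i).const_mul t).exp.aestronglyMeasurable) ?_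
    filter_upwards [hkey i] with ω hω
    rw [Real.norm_eq_abs, abs_of_pos (Real.exp_pos _)]
    exact hω
  have hmgf : ∀ i, mgf (V i) P t ≤ Real.exp (B * t ^ 2 * σ) := by
    intro i
    have hle : mgf (V i) P t ≤ 1 + B * t ^ 2 * σ := by
      calc mgf (V i) P t = ∫ ω, Real.exp (t * V i ω) ∂P := rfl
      _ ≤ ∫ ω, (1 + t * V i ω + (B * t ^ 2) * (V i ω) ^ 2) ∂P :=
          integral_mono_ae (hexp_int i) (hbound_int i) (hkey i)
      _ = 1 + B * t ^ 2 * σ := by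
          have h1 : Integrable (fun ω => 1 + t * V i ω) P :=
            (integrable_const 1).add ((hVint i).const_mul t)
          have h2 : Integrable (fun ω => (B * t ^ 2) * (V i ω) ^ 2) P :=
            (hVsq i).const_mul (B * t ^ 2)
          rw [integral_add h1 h2, integral_add (integrable_const 1) ((hVint i).const_mul t),
            integral_const, integral_const_mul, integral_const_mul, hEV i, hEVsq i]
          simp
    calc mgf (V i) P t ≤ 1 + B * t ^ 2 * σ := hle
    _ ≤ Real.exp (B * t ^ 2 * σ) := by linarith [Real.add_one_le_exp (B * t ^ 2 * σ)]
  have hindepV : iIndepFun V P :=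
    hindep.comp (fun i x => x - ∫ y, U i y ∂P) (fun i => measurable_id.sub measurable_const)
  calc (∫ ω, Real.exp (t * ∑ i, (U i ω - ∫ x, U i x ∂P)) ∂P)
      = mgf (∑ i, V i) P t := by
        simp only [mgf, Finset.sum_apply]
        rfl
  _ = ∏ i, mgf (V i) P t := hindepV.mgf_sum hVmeas Finset.univ
  _ ≤ ∏ _i : Fin n, Real.exp (B * t ^ 2 * σ) :=
      Finset.prod_le_prod (fun i _ => mgf_nonneg) (fun i _ => hmgf i)
  _ = Real.exp (B * n * t ^ 2 * σ) := by
      rw [Finset.prod_const, Finset.card_univ, Fintype.card_fin, ← Real.exp_nat_mul]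
      congr 1
      ring

end
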